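/- arXiv:2302.09358 — 10 statements merged into one kernel-verified Lean document; each statement's English description precedes it below -/
import Mathlib

section
/- Let s ≥ 1, let r_1,…,r_{s−1} be positive integers, and let m ≥ 2 be an integer. Consider the polynomial P(y_1,…,y_s) = Σ_{j=1}^{s−1} y_j^{r_j} y_{j+1} + y_s^m over ℂ. Then the partial derivatives ∂P/∂y_1,…,∂P/∂y_s all vanish at a point (y_1,…,y_s) ∈ ℂ^s if and only if y_1 = y_2 = ⋯ = y_s = 0. -/
open MvPolynomial

private lemma keyEval (n : ℕ) (r : Fin n → ℕ) (m : ℕ) (y : Fin (n+1) → ℂ) (c : ℕ) (hc : c < n+1) :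
    eval y (pderiv (⟨c, hc⟩ : Fin (n+1))
        ((∑ j : Fin n,
            X (Fin.castLE (Nat.sub_le (n+1) 1) j) ^ r j *
              X (Fin.cast (Nat.succ_pred_eq_of_pos (n.succ_pos)) j.succ)) +
          X (⟨n, by omega⟩ : Fin (n+1)) ^ m : MvPolynomial (Fin (n+1)) ℂ)) =
    (if h : c < n then (r ⟨c, h⟩ : ℂ) * y ⟨c, hc⟩ ^ (r ⟨c, h⟩ - 1) * y ⟨c+1, by omega⟩ else 0)
    + (if h : 0 < c ∧ c - 1 < n then y ⟨c-1, by omega⟩ ^ (r ⟨c-1, h.2⟩) else 0)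
    + (if c = n then (m : ℂ) * y ⟨n, by omega⟩ ^ (m-1) else 0) := by
  simp only [map_add, map_sum, pderiv_mul, pderiv_pow, pderiv_X, eval_add, eval_sum, eval_mul,
    eval_pow, eval_X, Pi.single_apply, map_natCast, mul_ite, mul_one, mul_zero,
    ite_mul, zero_mul, add_zero, zero_add, apply_ite (eval y), map_zero, eval_mul, eval_pow,
    eval_X, map_natCast, Fin.ext_iff, Fin.coe_castLE, Fin.coe_cast, Fin.val_succ]
  rw [Finset.sum_add_distrib]
  congr 1
  congr 1
  · split
    · next h =>
      rw [Finset.sum_eq_single (⟨c, h⟩ : Fin n)]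
      · simp
      · intro b _ hb; simp [Fin.ext_iff] at hb ⊢; intro hbc; exact absurd hbc hb
      · simp
    · next h =>
      apply Finset.sum_eq_zero; intro b _; simp; intro hbc; omega
  · split
    · next h =>
      rw [Finset.sum_eq_single (⟨c-1, h.2⟩ : Fin n)]
      · simp; omega
      · intro b _ hb; simp [Fin.ext_iff] at hb ⊢; intro hbc; omega
      · simp
    · next h =>
      apply Finset.sum_eq_zero; intro b _; simp; intro hbc; exfalso; omega
  · rcases eq_or_ne c n with h | h
    · simp [h]
    · rw [if_neg (by omega), if_neg h]

private lemma arithZero (n : ℕ) (r' : ℕ → ℕ) (hr' : ∀ j, 0 < r' j) (m : ℕ) (hm : 2 ≤ m)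
    (z : ℕ → ℂ)
    (E : ∀ c, c ≤ n → (if c < n then (r' c : ℂ) * z c ^ (r' c - 1) * z (c+1) else 0)
      + (if 0 < c then z (c-1) ^ r' (c-1) else 0)
      + (if c = n then (m : ℂ) * z n ^ (m-1) else 0) = 0) :
    ∀ c, c ≤ n → z c = 0 := by
  have hmC : (m : ℂ) ≠ 0 := Nat.cast_ne_zero.mpr (by omega)
  have hzn : z n = 0 := by
    by_contra hzn
    rcases Nat.eq_zero_or_pos n with rfl | hn
    · have e := E 0 le_rfl
      rw [if_neg (lt_irrefl 0), if_neg (lt_irrefl 0), if_pos rfl, zero_add, zero_add] at e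
      rcases mul_eq_zero.mp e with e1 | e1
      · exact hmC e1
      · exact hzn ((pow_eq_zero_iff (by omega : m - 1 ≠ 0)).mp e1)
    · have H : ∀ d, d ≤ n → z (n - d) ≠ 0 := by
        intro d
        induction d using Nat.strong_induction_on with
        | _ d ih =>
          intro hdn hzero
          rcases Nat.eq_zero_or_pos d with rfl | hd
          · exact hzn (by simpa using hzero)
          obtain ⟨k, rfl⟩ : ∃ k, d = k + 1 := ⟨d-1, by omega⟩
          rcases Nat.eq_zero_or_pos k with rfl | hk
          · have e := E n le_rfl
            rw [if_neg (lt_irrefl n), if_pos (by omega : 0 < n), if_pos rfl, zero_add] at e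
            have h1 : z (n - 1) = 0 := by simpa using hzero
            rw [h1, zero_pow (hr' (n-1)).ne', zero_add] at e
            rcases mul_eq_zero.mp e with e1 | e1
            · exact hmC e1
            · exact hzn ((pow_eq_zero_iff (by omega : m - 1 ≠ 0)).mp e1)
          · have e := E (n - k) (by omega)
            rw [if_pos (by omega : n - k < n), if_pos (by omega : 0 < n - k),
              if_neg (by omega : ¬ n - k = n), add_zero] at e
            have hz1 : z (n - k) ≠ 0 := ih k (by omega) (by omega)
            have hz2 : z (n - k + 1) ≠ 0 := by
              have := ih (k-1) (by omega) (by omega)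
              rwa [(by omega : n - (k-1) = n - k + 1)] at this
            have hzc : z (n - k - 1) = 0 := by
              rwa [(by omega : n - (k+1) = n - k - 1)] at hzero
            rw [hzc, zero_pow (hr' (n-k-1)).ne', add_zero] at e
            rcases mul_eq_zero.mp e with e1 | e1
            · rcases mul_eq_zero.mp e1 with e2 | e2
              · exact Nat.cast_ne_zero.mpr (hr' (n-k)).ne' e2
              · exact hz1 (pow_eq_zero_iff'.mp e2).1
            · exact hz2 e1
      have e := E 0 (by omega)
      rw [if_pos hn, if_neg (lt_irrefl 0), if_neg (by omega : ¬ (0:ℕ) = n), add_zero,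
        add_zero] at e
      have hz0 : z 0 ≠ 0 := by simpa using H n le_rfl
      have hz1 : z 1 ≠ 0 := by
        have := H (n-1) (by omega)
        rwa [(by omega : n - (n-1) = 1)] at this
      rcases mul_eq_zero.mp e with e1 | e1
      · rcases mul_eq_zero.mp e1 with e2 | e2
        · exact Nat.cast_ne_zero.mpr (hr' 0).ne' e2
        · exact hz0 (pow_eq_zero_iff'.mp e2).1
      · exact hz1 e1
  have H2 : ∀ d, d ≤ n → z (n - d) = 0 := by
    intro d
    induction d using Nat.strong_induction_on with
    | _ d ih =>
      intro hdn
      rcases Nat.eq_zero_or_pos d with rfl | hd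
      · simpa using hzn
      obtain ⟨k, rfl⟩ : ∃ k, d = k + 1 := ⟨d-1, by omega⟩
      rcases Nat.eq_zero_or_pos k with rfl | hk
      · have e := E n le_rfl
        rw [if_neg (lt_irrefl n), if_pos (by omega : 0 < n), if_pos rfl, hzn,
          zero_pow (by omega : m - 1 ≠ 0), mul_zero, add_zero, zero_add] at e
        have := (pow_eq_zero_iff'.mp e).1
        simpa using this
      · have e := E (n - k) (by omega)
        rw [if_pos (by omega : n - k < n), if_pos (by omega : 0 < n - k),
          if_neg (by omega : ¬ n - k = n), add_zero] at e
        have hz1 : z (n - k + 1) = 0 := by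
          have := ih (k-1) (by omega) (by omega)
          rwa [(by omega : n - (k-1) = n - k + 1)] at this
        rw [hz1, mul_zero, zero_add] at e
        have := (pow_eq_zero_iff'.mp e).1
        rwa [(by omega : n - (k+1) = n - k - 1)]
  intro c hc
  have := H2 (n - c) (by omega)
  rwa [(by omega : n - (n - c) = c)] at this

/-- The cycle-type polynomial `P = ∑_{j=1}^{s-1} y_j^{r_j} y_{j+1} + y_s^m` has the origin as
the only common zero of its partial derivatives. -/
theorem stmt1 (s : ℕ) (hs : 1 ≤ s) (r : Fin (s - 1) → ℕ) (hr : ∀ j, 0 < r j)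
    (m : ℕ) (hm : 2 ≤ m) (y : Fin s → ℂ) :
    (∀ i : Fin s,
      eval y (pderiv i
        ((∑ j : Fin (s - 1),
            X (Fin.castLE (Nat.sub_le s 1) j) ^ r j *
              X (Fin.cast (Nat.succ_pred_eq_of_pos hs) j.succ)) +
          X (⟨s - 1, Nat.sub_lt hs one_pos⟩ : Fin s) ^ m : MvPolynomial (Fin s) ℂ)) = 0)
    ↔ y = 0 := by
  obtain ⟨n, rfl⟩ : ∃ n, s = n + 1 := ⟨s - 1, by omega⟩
  constructor
  · intro h
    set r' : ℕ → ℕ := fun c => if hc : c < n then r ⟨c, hc⟩ else 1 with hr'def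
    set z : ℕ → ℂ := fun c => if hc : c < n + 1 then y ⟨c, hc⟩ else 0 with hzdef
    have E : ∀ c, c ≤ n → (if c < n then (r' c : ℂ) * z c ^ (r' c - 1) * z (c+1) else 0)
        + (if 0 < c then z (c-1) ^ r' (c-1) else 0)
        + (if c = n then (m : ℂ) * z n ^ (m-1) else 0) = 0 := by
      intro c hcle
      have e0 := (keyEval n r m y c (by omega)).symm.trans (h ⟨c, by omega⟩)
      refine Eq.trans ?_ e0
      congr 1
      congr 1
      · by_cases h1 : c < n
        · rw [if_pos h1, dif_pos h1]
          simp only [hr'def, hzdef]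
          rw [dif_pos h1, dif_pos (by omega : c < n+1), dif_pos (by omega : c+1 < n+1)]
        · rw [if_neg h1, dif_neg h1]
      · by_cases h2 : 0 < c
        · rw [if_pos h2, dif_pos (⟨h2, by omega⟩ : 0 < c ∧ c - 1 < n)]
          simp only [hr'def, hzdef]
          rw [dif_pos (by omega : c - 1 < n+1), dif_pos (by omega : c - 1 < n)]
        · rw [if_neg h2, dif_neg (by omega)]
      · by_cases h3 : c = n
        · rw [if_pos h3, if_pos h3]
          simp only [hzdef]
          rw [dif_pos (by omega : n < n+1)]
        · rw [if_neg h3, if_neg h3]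
    have hr'pos : ∀ j, 0 < r' j := by
      intro j; simp only [hr'def]; split
      · exact hr _
      · exact one_pos
    have hzzero := arithZero n r' hr'pos m hm z E
    funext i
    have hi := hzzero i.val (by omega)
    simp only [hzdef] at hi
    rw [dif_pos i.isLt] at hi
    simpa using hi
  · intro hy
    subst hy
    intro i
    obtain ⟨c, hc⟩ := i
    refine (keyEval n r m 0 c hc).trans ?_
    have hrne : ∀ j, r j ≠ 0 := fun j => (hr j).ne'
    simp [hrne]
    exact fun _ => Or.inr (by omega)
end

section
/- Let a and b be coprime odd integers with a ≥ 3 and b ≥ 3, and set d = a + b + 4. If there exist positive integers k and r with d = k·a and d = r·b + 2, then (a,b) = (3,5) (with d = 12) or (a,b) = (7,3) (with d = 14). -/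
/-- Case (A): if `a ∣ d` and `d ≡ 2 mod b` with `d = a + b + 4`, `a, b` coprime odd `≥ 3`,
then `(a,b) = (3,5)` or `(a,b) = (7,3)`. -/
theorem stmt2 (a b : ℕ) (ha : Odd a) (hb : Odd b) (hab : Nat.Coprime a b)
    (ha3 : 3 ≤ a) (hb3 : 3 ≤ b)
    (h : ∃ k r : ℕ, 0 < k ∧ 0 < r ∧ a + b + 4 = k * a ∧ a + b + 4 = r * b + 2) :
    (a = 3 ∧ b = 5) ∨ (a = 7 ∧ b = 3) := by
  obtain ⟨k, r, hk, hr, hka, hrb⟩ := h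
  -- a ∣ b + 4
  have hadvd : a ∣ b + 4 := by
    have h1 : a ∣ k * a - a := Nat.dvd_sub (Dvd.intro k (Nat.mul_comm a k)) dvd_rfl
    have h2 : k * a - a = b + 4 := by omega
    rwa [h2] at h1
  have hale : a ≤ b + 4 := Nat.le_of_dvd (by omega) hadvd
  -- a + 2 = (r - 1) * b
  have hsb : (r - 1) * b = a + 2 := by
    rcases Nat.exists_eq_add_of_le hr with ⟨r', rfl⟩
    simp only [Nat.add_sub_cancel_left, Nat.add_mul, one_mul] at *
    omega
  have hs3 : r - 1 ≤ 3 := by nlinarith [hsb, hale, hb3]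
  have hs1 : 1 ≤ r - 1 := by
    rcases Nat.eq_zero_or_pos (r - 1) with h0 | h1
    · simp [h0] at hsb
    · exact h1
  obtain ⟨ta, hta⟩ := ha
  obtain ⟨tb, htb⟩ := hb
  interval_cases hrv : (r - 1)
  · -- b = a + 2, a ∣ a + 6 so a ∣ 6
    have hb' : b = a + 2 := by omega
    rw [hb'] at hadvd
    have hadvd' : a ∣ a + 6 := by rwa [show a + 2 + 4 = a + 6 by ring] at hadvd
    have h6 : a ∣ 6 := (Nat.dvd_add_right dvd_rfl).mp hadvd'
    have ha6 : a ≤ 6 := Nat.le_of_dvd (by norm_num) h6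
    interval_cases a <;> omega
  · -- a + 2 = 2b, a even: contradiction
    omega
  · -- a + 2 = 3b, with a ≤ b + 4 gives b = 3, a = 7
    right; omega
end

section
/- Let a and b be coprime odd integers with a ≥ 3 and b ≥ 3, and set d = a + b + 4. If there exist positive integers k and r with d = k·a and d = r·b + 1, then (a,b) = (11,7) (with d = 22). -/
/-- Case (B): if `a ∣ d` and `d ≡ 1 mod b` with `d = a + b + 4`, `a, b` coprime odd `≥ 3`,
then `(a,b) = (11,7)`. -/
theorem stmt3 (a b : ℕ) (ha : Odd a) (hb : Odd b) (hab : Nat.Coprime a b)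
    (ha3 : 3 ≤ a) (hb3 : 3 ≤ b)
    (h : ∃ k r : ℕ, 0 < k ∧ 0 < r ∧ a + b + 4 = k * a ∧ a + b + 4 = r * b + 1) :
    a = 11 ∧ b = 7 := by
  obtain ⟨k, r, hk, hr, h1, h2⟩ := h
  have ha' : a % 2 = 1 := Nat.odd_iff.mp ha
  have hb' : b % 2 = 1 := Nat.odd_iff.mp hb
  -- k ≥ 2 and r ≥ 2
  have hk2 : 2 ≤ k := by
    by_contra hlt
    interval_cases k <;> omega
  have hr2 : 2 ≤ r := by
    by_contra hlt
    interval_cases r <;> omega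
  set K := k - 1 with hKdef
  set R := r - 1 with hRdef
  have hkK : k = K + 1 := by omega
  have hrR : r = R + 1 := by omega
  have hK1 : 1 ≤ K := by omega
  have hR1 : 1 ≤ R := by omega
  have e1 : k * a = K * a + a := by rw [hkK]; ring
  have e2 : r * b = R * b + b := by rw [hrR]; ring
  have hK : b + 4 = K * a := by omega
  have hR : a + 3 = R * b := by omega
  -- a ≤ b + 4
  have ha4 : a ≤ b + 4 := by
    have : 1 * a ≤ K * a := Nat.mul_le_mul_right a hK1
    omega
  rcases Nat.lt_or_ge R 2 with hRlt | hR2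
  · -- R = 1 : b = a + 3
    have hRe : R = 1 := by omega
    rw [hRe, one_mul] at hR
    have hK' : a + 7 = K * a := by omega
    have hK2 : 2 ≤ K := by
      by_contra hlt
      interval_cases K <;> omega
    have : 2 * a ≤ K * a := Nat.mul_le_mul_right a hK2
    have ha7 : a ≤ 7 := by omega
    interval_cases a <;> omega
  · -- R ≥ 2
    have h2b : 2 * b ≤ R * b := Nat.mul_le_mul_right b hR2
    have hb7 : b ≤ 7 := by omega
    have h3R : R * 3 ≤ R * b := Nat.mul_le_mul (le_refl R) hb3
    have hR4 : R ≤ 4 := by omega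
    have ha11 : a ≤ 11 := by omega
    interval_cases R <;> interval_cases b <;> interval_cases a <;> omega
end

section
/- Let a and b be coprime odd integers with a ≥ 3 and b ≥ 3, and set d = a + b + 4. If there exist positive integers r and s with d = r·a + 2 and d = s·b + 1, then (a,b) = (7,5) (with d = 16). -/
/-- Case (D): if `d ≡ 2 mod a` and `d ≡ 1 mod b` with `d = a + b + 4`, `a, b` coprime odd
`≥ 3`, then `(a,b) = (7,5)`. -/
theorem stmt5 (a b : ℕ) (ha : Odd a) (hb : Odd b) (hab : Nat.Coprime a b)
    (ha3 : 3 ≤ a) (hb3 : 3 ≤ b)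
    (h : ∃ r s : ℕ, 0 < r ∧ 0 < s ∧ a + b + 4 = r * a + 2 ∧ a + b + 4 = s * b + 1) :
    a = 7 ∧ b = 5 := by
  obtain ⟨r, s, hr, hs, h1, h2⟩ := h
  obtain ⟨m, rfl⟩ : ∃ m, r = m + 1 := ⟨r - 1, by omega⟩
  obtain ⟨n, rfl⟩ : ∃ n, s = n + 1 := ⟨s - 1, by omega⟩
  rw [add_mul, one_mul] at h1 h2
  have hma : m * a = b + 2 := by linarith
  have hnb : n * b = a + 3 := by linarith
  have hn1 : 1 ≤ n := by
    rcases Nat.eq_zero_or_pos n with h0 | h0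
    · subst h0; rw [zero_mul] at hnb; omega
    · exact h0
  have hble : b ≤ a + 3 := by
    calc b = 1 * b := (one_mul b).symm
    _ ≤ n * b := Nat.mul_le_mul_right b hn1
    _ = a + 3 := hnb
  have hmodd : Odd m := by
    have hodd : Odd (m * a) := by rw [hma]; exact hb.add_even even_two
    exact (Nat.odd_mul.mp hodd).1
  have hm1 : m = 1 := by
    by_contra hm
    have hm3 : 3 ≤ m := by obtain ⟨k, hk⟩ := hmodd; omega
    have : 3 * a ≤ m * a := Nat.mul_le_mul_right a hm3
    omega
  rw [hm1, one_mul] at hma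
  -- now a = b + 2, and n * b = b + 5
  have hab2 : a = b + 2 := by omega
  have hnb5 : n * b = b + 5 := by omega
  have hn2 : 2 ≤ n := by
    rcases Nat.lt_or_ge n 2 with h0 | h0
    · interval_cases n <;> omega
    · exact h0
  have hb5 : b ≤ 5 := by
    have : 2 * b ≤ n * b := Nat.mul_le_mul_right b hn2
    omega
  interval_cases b
  · obtain ⟨k, hk⟩ := hb; omega
  · omega
  · exact ⟨by omega, rfl⟩
end

section
/- Let a and b be coprime odd integers with a ≥ 3 and b ≥ 3, and set d = a + b + 4. Suppose there exists a polynomial F ∈ ℂ[x_0,x_1,x_2,x_3] that is weighted homogeneous of degree d with respect to the weights (1,2,a,b) and whose partial derivatives ∂F/∂x_0,…,∂F/∂x_3 have no common zero in ℂ^4 other than the origin. Then the unordered pair {a,b} is one of {3,7} (with d = 14), {3,5} (with d = 12), {5,7} (with d = 16), or {7,11} (with d = 22). -/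
/-!
If `F` is quasi-smooth, then for each variable `xᵢ` some `∂F/∂xⱼ` is nonzero at the point with
`xᵢ = 1` and all other coordinates `0`, so `F` contains a monomial `xᵢᵏ xⱼ`; by weighted homogeneity
`k wᵢ + wⱼ = d`. For the weights `(1, 2, a, b)` and `d = a + b + 4` this gives `a ∣ b + c` and
`b ∣ a + e` with `2 ≤ c, e ≤ 4`, which bounds `a` and `b` by `12` and leaves finitely many cases.
-/

open MvPolynomial

namespace MvPolynomial

variable {σ R : Type*} [CommSemiring R]

def IsQuasiSmooth (F : MvPolynomial σ R) : Prop :=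
  ∀ x : σ → R, (∀ i, eval x (pderiv i F) = 0) → x = 0

theorem eval_piSingle_one_eq_zero [DecidableEq σ] {p : MvPolynomial σ R} {i : σ}
    (hp : ∀ k, coeff (Finsupp.single i k) p = 0) : eval (Pi.single i 1) p = 0 := by
  rw [eval_eq]
  refine Finset.sum_eq_zero fun m hm => ?_
  obtain ⟨j, hji, hmj⟩ : ∃ j ≠ i, m j ≠ 0 := by
    by_contra! h
    refine mem_support_iff.mp hm (hp (m i) ▸ congrArg (coeff · p) ?_)
    ext j
    rcases eq_or_ne j i with rfl | hji
    · simp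
    · simp [h j hji, hji.symm]
  refine mul_eq_zero_of_right _ (Finset.prod_eq_zero (Finsupp.mem_support_iff.mpr hmj) ?_)
  simp [hji, hmj]

theorem IsWeightedHomogeneous.exists_mul_add_eq_of_isQuasiSmooth [Nontrivial R]
    {w : σ → ℕ} {F : MvPolynomial σ R} {d : ℕ} (hF : F.IsWeightedHomogeneous w d)
    (hs : F.IsQuasiSmooth) (i₀ : σ) : ∃ i k, k * w i₀ + w i = d := by
  classical
  by_contra! h
  have hx : (Pi.single i₀ 1 : σ → R) = 0 := by
    refine hs _ fun i => eval_piSingle_one_eq_zero fun k => ?_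
    rw [coeff_pderiv]
    refine mul_eq_zero_of_left (not_ne_iff.mp fun hc => h i k ?_) _
    simpa [Finsupp.weight_single] using hF hc
  simpa using congrFun hx i₀

end MvPolynomial

theorem exists_dvd_add_of_mul_add_eq {a b c k : ℕ} (ha : Odd a) (ha3 : 3 ≤ a)
    (hc : c = 1 ∨ c = 2 ∨ c = a ∨ c = b) (h : k * a + c = a + b + 4) :
    ∃ e, 2 ≤ e ∧ e ≤ 4 ∧ a ∣ b + e := by
  rcases hc with rfl | rfl | rfl | rfl
  · exact ⟨3, by norm_num, by norm_num, (Nat.dvd_add_right (dvd_refl a)).mp ⟨k, by linarith⟩⟩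
  · exact ⟨2, le_rfl, by norm_num, (Nat.dvd_add_right (dvd_refl a)).mp ⟨k, by linarith⟩⟩
  · exact ⟨4, by norm_num, le_rfl, ⟨k, by linarith⟩⟩
  · have h4 : a ∣ 4 := (Nat.dvd_add_right (dvd_refl a)).mp ⟨k, by linarith⟩
    have := Nat.le_of_dvd (by norm_num) h4
    interval_cases a <;> simp_all [Nat.odd_iff]

theorem le_twelve_of_dvd_add_of_dvd_add {a b : ℕ} (ha3 : 3 ≤ a) (hb3 : 3 ≤ b)
    (hA : ∃ c, 2 ≤ c ∧ c ≤ 4 ∧ a ∣ b + c) (hB : ∃ e, 2 ≤ e ∧ e ≤ 4 ∧ b ∣ a + e) :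
    a ≤ 12 ∧ b ≤ 12 := by
  obtain ⟨c, hc2, hc4, k, hk⟩ := hA
  obtain ⟨e, he2, he4, l, hl⟩ := hB
  have hab : a ≤ b + c := Nat.le_of_dvd (by omega) ⟨k, hk⟩
  have hba : b ≤ a + e := Nat.le_of_dvd (by omega) ⟨l, hl⟩
  have hk3 : k ≤ 3 := by
    by_contra! hk4
    nlinarith
  have hl3 : l ≤ 3 := by
    by_contra! hl4
    nlinarith
  interval_cases k <;> interval_cases l <;> omega

theorem pair_eq_of_dvd_add_of_dvd_add {a b : ℕ} (ha : Odd a) (hb : Odd b)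
    (hab : Nat.Coprime a b) (ha3 : 3 ≤ a) (hb3 : 3 ≤ b)
    (hA : ∃ c, 2 ≤ c ∧ c ≤ 4 ∧ a ∣ b + c) (hB : ∃ e, 2 ≤ e ∧ e ≤ 4 ∧ b ∣ a + e) :
    ({a, b} : Finset ℕ) = {3, 7} ∨ ({a, b} : Finset ℕ) = {3, 5} ∨
      ({a, b} : Finset ℕ) = {5, 7} ∨ ({a, b} : Finset ℕ) = {7, 11} := by
  obtain ⟨ha12, hb12⟩ := le_twelve_of_dvd_add_of_dvd_add ha3 hb3 hA hB
  obtain ⟨c, hc2, hc4, hc⟩ := hA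
  obtain ⟨e, he2, he4, he⟩ := hB
  rw [Nat.odd_iff] at ha hb
  interval_cases a <;> interval_cases b <;> first | omega | (revert hab; decide)

/-- Classification of quasi-smooth hypersurfaces of type `(a+b+4, [1,2,a,b])` with `a, b`
coprime odd integers: the unordered pair `{a,b}` is `{3,7}`, `{3,5}`, `{5,7}` or `{7,11}`. -/
theorem stmt6 (a b : ℕ) (ha : Odd a) (hb : Odd b) (hab : Nat.Coprime a b)
    (ha3 : 3 ≤ a) (hb3 : 3 ≤ b)
    (hF : ∃ F : MvPolynomial (Fin 4) ℂ,
      F.IsWeightedHomogeneous ![1, 2, a, b] (a + b + 4) ∧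
      ∀ x : Fin 4 → ℂ, (∀ i, eval x (pderiv i F) = 0) → x = 0) :
    ({a, b} : Finset ℕ) = {3, 7} ∨ ({a, b} : Finset ℕ) = {3, 5} ∨
      ({a, b} : Finset ℕ) = {5, 7} ∨ ({a, b} : Finset ℕ) = {7, 11} := by
  obtain ⟨F, hhom, hsmooth⟩ := hF
  have weight_eq (i : Fin 4) : ![1, 2, a, b] i = 1 ∨ ![1, 2, a, b] i = 2 ∨
      ![1, 2, a, b] i = a ∨ ![1, 2, a, b] i = b := by
    fin_cases i <;> simp
  obtain ⟨i, k, hk⟩ := hhom.exists_mul_add_eq_of_isQuasiSmooth hsmooth 2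
  obtain ⟨j, l, hl⟩ := hhom.exists_mul_add_eq_of_isQuasiSmooth hsmooth 3
  refine pair_eq_of_dvd_add_of_dvd_add ha hb hab ha3 hb3
    (exists_dvd_add_of_mul_add_eq ha ha3 (weight_eq i) hk)
    (exists_dvd_add_of_mul_add_eq hb hb3 (by have := weight_eq j; tauto) (k := l)
      (by rw [add_comm b a]; exact hl))
end

section
/- Let F = x_0^{16} + x_1^8 + x_0·x_2^3 + x_1·x_3^2 ∈ ℂ[x_0,x_1,x_2,x_3]. If all four partial derivatives ∂F/∂x_0, ∂F/∂x_1, ∂F/∂x_2, ∂F/∂x_3 vanish at a point (x_0,x_1,x_2,x_3) ∈ ℂ^4, then x_0 = x_1 = x_2 = x_3 = 0. -/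
open MvPolynomial

/-- The basic example of type (16,[1,2,5,7]) is quasi-smooth: the partial derivatives of
the defining polynomial have no common zero other than the origin. -/
theorem stmt9 (x : Fin 4 → ℂ)
    (h : ∀ i : Fin 4, eval x (pderiv i
      (X 0 ^ 16 + X 1 ^ 8 + X 0 * X 2 ^ 3 + X 1 * X 3 ^ 2 : MvPolynomial (Fin 4) ℂ)) = 0) :
    x = 0 := by
  have h0 := h 0
  have h1 := h 1
  have h2 := h 2
  have h3 := h 3
  simp [pderiv_X, Pi.single_apply] at h0 h1 h2 h3
  have e02 : x 0 = 0 ∧ x 2 = 0 := by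
    rcases h2 with h | h
    · refine ⟨h, ?_⟩
      rw [h] at h0
      have : x 2 ^ 3 = 0 := by simpa using h0
      exact pow_eq_zero_iff (by norm_num) |>.mp this
    · rw [h] at h0
      have : x 0 ^ 15 = 0 := by
        have : (16 : ℂ) * x 0 ^ 15 = 0 := by simpa using h0
        simpa using this
      exact ⟨pow_eq_zero_iff (by norm_num) |>.mp this, h⟩
  have e13 : x 1 = 0 ∧ x 3 = 0 := by
    rcases h3 with h | h
    · refine ⟨h, ?_⟩
      rw [h] at h1
      have : x 3 ^ 2 = 0 := by simpa using h1
      exact pow_eq_zero_iff (by norm_num) |>.mp this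
    · rw [h] at h1
      have : x 1 ^ 7 = 0 := by
        have : (8 : ℂ) * x 1 ^ 7 = 0 := by simpa using h1
        simpa using this
      exact ⟨pow_eq_zero_iff (by norm_num) |>.mp this, h⟩
  funext i
  fin_cases i <;> simp [e02.1, e02.2, e13.1, e13.2]
end

section
/- Let G = w^2 + x·z^3 + y^4·z^2 + x^{20}·y + y^{11} ∈ ℂ[x,y,z,w]. If all four partial derivatives ∂G/∂x, ∂G/∂y, ∂G/∂z, ∂G/∂w vanish at a point (x,y,z,w) ∈ ℂ^4, then x = y = z = w = 0. -/
open MvPolynomial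

/-- The basic example of type (22,[1,2,7,11]) is quasi-smooth: the partial derivatives of
the defining polynomial have no common zero other than the origin. -/
theorem stmt12 (x : Fin 4 → ℂ)
    (h : ∀ i : Fin 4, eval x (pderiv i
      (X 3 ^ 2 + X 0 * X 2 ^ 3 + X 1 ^ 4 * X 2 ^ 2 + X 0 ^ 20 * X 1 + X 1 ^ 11 : MvPolynomial (Fin 4) ℂ)) = 0) :
    x = 0 := by
  have h0 := h 0
  have h1 := h 1
  have h2 := h 2
  have h3 := h 3
  simp [pderiv_X, Pi.single_apply] at h0 h1 h2 h3
  set X := x 0 with hX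
  set Y := x 1 with hY
  set Z := x 2 with hZ
  have key : X = 0 ∧ Y = 0 ∧ Z = 0 := by
    by_cases hz : Z = 0
    · have hA : Y * (20 * X ^ 19) = 0 := by linear_combination h0 - Z ^ 2 * hz
      rcases mul_eq_zero.mp hA with hy | hx
      · refine ⟨?_, hy, hz⟩
        have : X ^ 20 = 0 := by linear_combination h1 - 11 * Y ^ 9 * hy - Z * (4 * Y ^ 3) * hz
        exact pow_eq_zero_iff (by norm_num) |>.mp this
      · have hx0 : X = 0 := by
          have : X ^ 19 = 0 := by linear_combination (1/20) * hx
          exact pow_eq_zero_iff (by norm_num) |>.mp this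
        refine ⟨hx0, ?_, hz⟩
        have : Y ^ 10 = 0 := by
          linear_combination (1/11) * h1 - (1/11) * X ^ 19 * hx0 - (4/11) * Z * Y ^ 3 * hz
        exact pow_eq_zero_iff (by norm_num) |>.mp this
    · exfalso
      have he : 3 * X * Z + 2 * Y ^ 4 = 0 := by
        rcases mul_eq_zero.mp (show Z * (3 * X * Z + 2 * Y ^ 4) = 0 by
          linear_combination h2) with h' | h'
        · exact absurd h' hz
        · exact h'
      have hx : X ≠ 0 := by
        intro hx0
        have hy4 : Y ^ 4 = 0 := by linear_combination (1/2) * he - (3/2) * Z * hx0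
        have hy0 : Y = 0 := pow_eq_zero_iff (by norm_num) |>.mp hy4
        have : Z ^ 3 = 0 := by
          linear_combination h0 - 20 * X ^ 19 * hy0
        exact hz (pow_eq_zero_iff (by norm_num) |>.mp this)
      have hy : Y ≠ 0 := by
        intro hy0
        have : X * Z = 0 := by linear_combination (1/3) * he - (2/3) * Y ^ 3 * hy0
        rcases mul_eq_zero.mp this with h' | h'
        · exact hx h'
        · exact hz h'
      have F : 8 * Y ^ 11 = 540 * X ^ 22 := by
        have hf : Y * (8 * Y ^ 11 - 540 * X ^ 22) = 0 := by
          linear_combination (9 * X ^ 2 * Z ^ 2 - 6 * X * Z * Y ^ 4 + 4 * Y ^ 8) * he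
            - 27 * X ^ 3 * h0
        rcases mul_eq_zero.mp hf with h' | h'
        · exact absurd h' hy
        · linear_combination h'
      have G : 16 * Y ^ 11 + 9 * X ^ 22 + 99 * X ^ 2 * Y ^ 10 = 0 := by
        linear_combination 9 * X ^ 2 * h1 - 4 * Y ^ 3 * (3 * X * Z - 2 * Y ^ 4) * he
      have H : Y ^ 10 = -11 * X ^ 20 := by
        have hh : X ^ 2 * (Y ^ 10 + 11 * X ^ 20) = 0 := by
          linear_combination (1/99) * G - (2/99) * F
        rcases mul_eq_zero.mp hh with h' | h'
        · exact absurd (pow_eq_zero_iff (by norm_num) |>.mp h') hx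
        · linear_combination h'
      have hyv : 22 * Y = -135 * X ^ 2 := by
        have hh : X ^ 20 * (22 * Y + 135 * X ^ 2) = 0 := by
          linear_combination (-1/4) * F + 2 * Y * H
        rcases mul_eq_zero.mp hh with h' | h'
        · exact absurd (pow_eq_zero_iff (by norm_num) |>.mp h') hx
        · linear_combination h'
      have h10 : (22 * Y) ^ 10 = (-135 * X ^ 2) ^ 10 := by rw [hyv]
      have hfin : ((135 : ℂ) ^ 10 + 11 * 22 ^ 10) * X ^ 20 = 0 := by
        linear_combination 22 ^ 10 * H - h10
      rcases mul_eq_zero.mp hfin with h' | h'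
      · norm_num at h'
      · exact hx (pow_eq_zero_iff (by norm_num) |>.mp h')
  funext i
  fin_cases i
  · exact key.1
  · exact key.2.1
  · exact key.2.2
  · exact h3
end

section
/- Let F = x_0^{14} + x_1^7 + x_1·x_2^4 + x_3^2 ∈ ℂ[x_0,x_1,x_2,x_3] and let J_F be the ideal of ℂ[x_0,x_1,x_2,x_3] generated by the four partial derivatives of F. Then x_0^{13}·x_1 ∈ J_F, but x_0^{12}·x_1 ∉ J_F. -/
open MvPolynomial

private lemma key13 {p : MvPolynomial (Fin 4) ℂ} {s m : Fin 4 →₀ ℕ} {a : ℂ} (h : ¬ s ≤ m) :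
    coeff m (p * monomial s a) = 0 := by
  rw [coeff_mul_monomial', if_neg h]

/-- For the basic type (14,[1,2,3,7]) surface, `X 0 ^ 13 * X 1` lies in the Jacobian ideal while
`X 0 ^ 12 * X 1` does not. -/
theorem stmt13 :
    (X 0 ^ 13 * X 1 : MvPolynomial (Fin 4) ℂ) ∈
      Ideal.span (Set.range fun i : Fin 4 => pderiv i
        (X 0 ^ 14 + X 1 ^ 7 + X 1 * X 2 ^ 4 + X 3 ^ 2 : MvPolynomial (Fin 4) ℂ)) ∧
    (X 0 ^ 12 * X 1 : MvPolynomial (Fin 4) ℂ) ∉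
      Ideal.span (Set.range fun i : Fin 4 => pderiv i
        (X 0 ^ 14 + X 1 ^ 7 + X 1 * X 2 ^ 4 + X 3 ^ 2 : MvPolynomial (Fin 4) ℂ)) := by
  have h0 : pderiv (0:Fin 4) (X 0 ^ 14 + X 1 ^ 7 + X 1 * X 2 ^ 4 + X 3 ^ 2 : MvPolynomial (Fin 4) ℂ)
      = monomial (Finsupp.single 0 13) 14 := by
    simp [X_pow_eq_monomial, C_mul_monomial, ← Finsupp.single_tsub]
  have h1 : pderiv (1:Fin 4) (X 0 ^ 14 + X 1 ^ 7 + X 1 * X 2 ^ 4 + X 3 ^ 2 : MvPolynomial (Fin 4) ℂ)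
      = monomial (Finsupp.single 1 6) 7 + monomial (Finsupp.single 2 4) 1 := by
    simp [X_pow_eq_monomial, C_mul_monomial, ← Finsupp.single_tsub]
  have h2 : pderiv (2:Fin 4) (X 0 ^ 14 + X 1 ^ 7 + X 1 * X 2 ^ 4 + X 3 ^ 2 : MvPolynomial (Fin 4) ℂ)
      = monomial (Finsupp.single 1 1 + Finsupp.single 2 3) 4 := by
    simp [X_pow_eq_monomial, C_mul_monomial, ← Finsupp.single_tsub, monomial_mul]
    rw [X, monomial_mul]
    norm_num
  have h3 : pderiv (3:Fin 4) (X 0 ^ 14 + X 1 ^ 7 + X 1 * X 2 ^ 4 + X 3 ^ 2 : MvPolynomial (Fin 4) ℂ)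
      = monomial (Finsupp.single 3 1) 2 := by
    simp [X_pow_eq_monomial, C_mul_monomial, ← Finsupp.single_tsub]
  constructor
  · have hmem : (monomial (Finsupp.single 0 13) 14 : MvPolynomial (Fin 4) ℂ) ∈
        Ideal.span (Set.range fun i : Fin 4 => pderiv i
          (X 0 ^ 14 + X 1 ^ 7 + X 1 * X 2 ^ 4 + X 3 ^ 2 : MvPolynomial (Fin 4) ℂ)) := by
      rw [← h0]; exact Ideal.subset_span ⟨0, rfl⟩
    have hm := Ideal.mul_mem_left _ (C (14:ℂ)⁻¹ * X 1) hmem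
    convert hm using 1
    rw [mul_assoc]
    rw [X_pow_eq_monomial, X, monomial_mul, monomial_mul, C_mul_monomial]
    norm_num [add_comm]
  · rw [Ideal.mem_span_range_iff_exists_fun]
    rintro ⟨c, hc⟩
    rw [Fin.sum_univ_four, h0, h1, h2, h3] at hc
    have hco := congrArg (coeff (Finsupp.single 0 12 + Finsupp.single 1 1)) hc
    rw [coeff_add, coeff_add, coeff_add, mul_add, coeff_add] at hco
    rw [key13 (by intro h; simpa using (Finsupp.le_def.mp h) 0),
        key13 (by intro h; simpa using (Finsupp.le_def.mp h) 1),
        key13 (by intro h; simpa using (Finsupp.le_def.mp h) 2),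
        key13 (by intro h; simpa using (Finsupp.le_def.mp h) 2),
        key13 (by intro h; simpa using (Finsupp.le_def.mp h) 3)] at hco
    rw [X_pow_eq_monomial, X, monomial_mul, coeff_monomial] at hco
    simp at hco
end

section
/- Let F = x_0^{12} + x_1^6 + x_2^4 + x_1·x_3^2 ∈ ℂ[x_0,x_1,x_2,x_3] and let J_F be the ideal of ℂ[x_0,x_1,x_2,x_3] generated by the four partial derivatives of F. Then x_0^{11}·x_1 ∈ J_F, but x_0^{10}·x_1 ∉ J_F. -/
open MvPolynomial

private lemma single_sub_nat (a : Fin 4) (b c : ℕ) :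
    (Finsupp.single a b - Finsupp.single a c : Fin 4 →₀ ℕ) = Finsupp.single a (b - c) :=
  Finsupp.single_tsub.symm

private lemma pd0 : pderiv (0:Fin 4) (X 0 ^ 12 + X 1 ^ 6 + X 2 ^ 4 + X 1 * X 3 ^ 2 :
    MvPolynomial (Fin 4) ℂ) = monomial (Finsupp.single 0 11) 12 := by
  simp [pderiv_X, X_pow_eq_monomial, single_sub_nat]

private lemma pd1 : pderiv (1:Fin 4) (X 0 ^ 12 + X 1 ^ 6 + X 2 ^ 4 + X 1 * X 3 ^ 2 :
    MvPolynomial (Fin 4) ℂ) =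
    monomial (Finsupp.single 1 5) 6 + monomial (Finsupp.single 3 2) 1 := by
  simp [pderiv_X, X_pow_eq_monomial, single_sub_nat]

private lemma pd2 : pderiv (2:Fin 4) (X 0 ^ 12 + X 1 ^ 6 + X 2 ^ 4 + X 1 * X 3 ^ 2 :
    MvPolynomial (Fin 4) ℂ) = monomial (Finsupp.single 2 3) 4 := by
  simp [pderiv_X, X_pow_eq_monomial, single_sub_nat]

private lemma pd3 : pderiv (3:Fin 4) (X 0 ^ 12 + X 1 ^ 6 + X 2 ^ 4 + X 1 * X 3 ^ 2 :
    MvPolynomial (Fin 4) ℂ) =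
    monomial (Finsupp.single 1 1 + Finsupp.single 3 1) 2 := by
  simp [pderiv_X, X_pow_eq_monomial, single_sub_nat]
  rw [show (X 1 : MvPolynomial (Fin 4) ℂ) = monomial (Finsupp.single 1 1) 1 from rfl,
    monomial_mul, one_mul]

/-- For the basic type (12,[1,2,3,5]) surface, `X 0 ^ 11 * X 1` lies in the Jacobian ideal while
`X 0 ^ 10 * X 1` does not. -/
theorem stmt14 :
    (X 0 ^ 11 * X 1 : MvPolynomial (Fin 4) ℂ) ∈
      Ideal.span (Set.range fun i : Fin 4 => pderiv i
        (X 0 ^ 12 + X 1 ^ 6 + X 2 ^ 4 + X 1 * X 3 ^ 2 : MvPolynomial (Fin 4) ℂ)) ∧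
    (X 0 ^ 10 * X 1 : MvPolynomial (Fin 4) ℂ) ∉
      Ideal.span (Set.range fun i : Fin 4 => pderiv i
        (X 0 ^ 12 + X 1 ^ 6 + X 2 ^ 4 + X 1 * X 3 ^ 2 : MvPolynomial (Fin 4) ℂ)) := by
  constructor
  · have hmem : pderiv (0:Fin 4) (X 0 ^ 12 + X 1 ^ 6 + X 2 ^ 4 + X 1 * X 3 ^ 2 :
        MvPolynomial (Fin 4) ℂ) ∈
        Ideal.span (Set.range fun i : Fin 4 => pderiv i
          (X 0 ^ 12 + X 1 ^ 6 + X 2 ^ 4 + X 1 * X 3 ^ 2 : MvPolynomial (Fin 4) ℂ)) :=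
      Ideal.subset_span ⟨0, rfl⟩
    have h := Ideal.mul_mem_left _ (C (1/12) * X 1) hmem
    rw [pd0] at h
    have hm : (monomial (Finsupp.single 0 11) (12:ℂ) : MvPolynomial (Fin 4) ℂ)
        = C 12 * X 0 ^ 11 := by
      rw [X_pow_eq_monomial, C_mul_monomial, mul_one]
    rw [hm] at h
    convert h using 1
    have hC : (C (1/12:ℂ) * C (12:ℂ) : MvPolynomial (Fin 4) ℂ) = 1 := by
      rw [← C_mul]; norm_num
    rw [← one_mul (X 0 ^ 11 * X 1 : MvPolynomial (Fin 4) ℂ), ← hC]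
    ring
  · intro h
    rw [Ideal.mem_span_range_iff_exists_fun] at h
    obtain ⟨c, hc⟩ := h
    have hco := congrArg (coeff (Finsupp.single 0 10 + Finsupp.single 1 1)) hc
    rw [Fin.sum_univ_four, pd0, pd1, pd2, pd3] at hco
    rw [show (X 0 ^ 10 * X 1 : MvPolynomial (Fin 4) ℂ)
        = monomial (Finsupp.single 0 10 + Finsupp.single 1 1) 1 by
      rw [X_pow_eq_monomial, show (X 1 : MvPolynomial (Fin 4) ℂ)
        = monomial (Finsupp.single 1 1) 1 from rfl, monomial_mul, one_mul]] at hco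
    have h0 : ¬ (Finsupp.single (0:Fin 4) 11 ≤ Finsupp.single 0 10 + Finsupp.single 1 1) := by
      intro hle
      have := hle 0
      simp [Finsupp.single_apply, Finsupp.add_apply] at this
    have h1a : ¬ (Finsupp.single (1:Fin 4) 5 ≤ Finsupp.single 0 10 + Finsupp.single 1 1) := by
      intro hle
      have := hle 1
      simp [Finsupp.single_apply, Finsupp.add_apply] at this
    have h1b : ¬ (Finsupp.single (3:Fin 4) 2 ≤ Finsupp.single 0 10 + Finsupp.single 1 1) := by
      intro hle
      have := hle 3
      simp [Finsupp.single_apply, Finsupp.add_apply] at this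
    have h2 : ¬ (Finsupp.single (2:Fin 4) 3 ≤ Finsupp.single 0 10 + Finsupp.single 1 1) := by
      intro hle
      have := hle 2
      simp [Finsupp.single_apply, Finsupp.add_apply] at this
    have h3 : ¬ (Finsupp.single (1:Fin 4) 1 + Finsupp.single 3 1
        ≤ Finsupp.single 0 10 + Finsupp.single 1 1) := by
      intro hle
      have := hle 3
      simp [Finsupp.single_apply, Finsupp.add_apply] at this
    rw [mul_add] at hco
    simp only [coeff_add, coeff_mul_monomial', coeff_monomial, if_neg h0, if_neg h1a,
      if_neg h1b, if_neg h2, if_neg h3, if_pos rfl] at hco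
    norm_num at hco
end

section
/- Let F = x_0^{22} + x_1^{11} + x_0·x_2^3 + x_3^2 ∈ ℂ[x_0,x_1,x_2,x_3] and let J_F be the ideal of ℂ[x_0,x_1,x_2,x_3] generated by the four partial derivatives of F. Then x_0·x_1^4·x_2^2 ∈ J_F, but x_1^4·x_2^2 ∉ J_F. -/
open MvPolynomial

/-- Key contradiction: a monomial `X 1 ^ 4 * X 2 ^ 2` cannot lie in the ideal
generated by `X 2 ^ 3` and `X 1 ^ 10`. -/
theorem stmt16_aux (a b : MvPolynomial (Fin 4) ℂ)
    (h : a * X 2 ^ 3 + b * X 1 ^ 10 = X 1 ^ 4 * X 2 ^ 2) : False := by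
  have hm := congrArg (coeff (Finsupp.single 1 4 + Finsupp.single 2 2)) h
  rw [coeff_add] at hm
  rw [show (X 2 ^ 3 : MvPolynomial (Fin 4) ℂ) = monomial (Finsupp.single 2 3) 1 from
    X_pow_eq_monomial, show (X 1 ^ 10 : MvPolynomial (Fin 4) ℂ) =
    monomial (Finsupp.single 1 10) 1 from X_pow_eq_monomial] at hm
  rw [coeff_mul_monomial', coeff_mul_monomial'] at hm
  rw [if_neg, if_neg] at hm
  · rw [show (X 1 ^ 4 * X 2 ^ 2 : MvPolynomial (Fin 4) ℂ)
      = monomial (Finsupp.single 1 4 + Finsupp.single 2 2) 1 from by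
        rw [X_pow_eq_monomial, X_pow_eq_monomial, monomial_mul, mul_one],
      coeff_monomial, if_pos rfl] at hm
    simp at hm
  · intro hle
    have := hle 1
    simp [Finsupp.single_apply] at this
  · intro hle
    have := hle 2
    simp [Finsupp.single_apply] at this

/-- For the basic type (22,[1,2,7,11]) surface, `X 0 * X 1 ^ 4 * X 2 ^ 2` lies in the Jacobian ideal while
`X 1 ^ 4 * X 2 ^ 2` does not. -/
theorem stmt16 :
    (X 0 * X 1 ^ 4 * X 2 ^ 2 : MvPolynomial (Fin 4) ℂ) ∈
      Ideal.span (Set.range fun i : Fin 4 => pderiv i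
        (X 0 ^ 22 + X 1 ^ 11 + X 0 * X 2 ^ 3 + X 3 ^ 2 : MvPolynomial (Fin 4) ℂ)) ∧
    (X 1 ^ 4 * X 2 ^ 2 : MvPolynomial (Fin 4) ℂ) ∉
      Ideal.span (Set.range fun i : Fin 4 => pderiv i
        (X 0 ^ 22 + X 1 ^ 11 + X 0 * X 2 ^ 3 + X 3 ^ 2 : MvPolynomial (Fin 4) ℂ)) := by
  have hd0 : pderiv (0:Fin 4) (X 0 ^ 22 + X 1 ^ 11 + X 0 * X 2 ^ 3 + X 3 ^ 2 : MvPolynomial (Fin 4) ℂ)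
      = 22 * X 0 ^ 21 + X 2 ^ 3 := by simp [pderiv_X]
  have hd1 : pderiv (1:Fin 4) (X 0 ^ 22 + X 1 ^ 11 + X 0 * X 2 ^ 3 + X 3 ^ 2 : MvPolynomial (Fin 4) ℂ)
      = 11 * X 1 ^ 10 := by simp [pderiv_X]
  have hd2 : pderiv (2:Fin 4) (X 0 ^ 22 + X 1 ^ 11 + X 0 * X 2 ^ 3 + X 3 ^ 2 : MvPolynomial (Fin 4) ℂ)
      = 3 * X 0 * X 2 ^ 2 := by simp [pderiv_X]; ring
  have hd3 : pderiv (3:Fin 4) (X 0 ^ 22 + X 1 ^ 11 + X 0 * X 2 ^ 3 + X 3 ^ 2 : MvPolynomial (Fin 4) ℂ)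
      = 2 * X 3 := by simp [pderiv_X]
  constructor
  · rw [Ideal.mem_span_range_iff_exists_fun]
    refine ⟨![0, 0, C (3⁻¹ : ℂ) * X 1 ^ 4, 0], ?_⟩
    rw [Fin.sum_univ_four]
    simp only [Matrix.cons_val_zero, Matrix.cons_val_one, Matrix.head_cons,
      Matrix.cons_val_two, Matrix.tail_cons, Matrix.cons_val_three, hd2,
      zero_mul, add_zero, zero_add]
    rw [show ((3:MvPolynomial (Fin 4) ℂ)) = C 3 from (map_ofNat C 3).symm]
    have h33 : (C (3⁻¹:ℂ) : MvPolynomial (Fin 4) ℂ) * C 3 = 1 := by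
      rw [← C_mul]; norm_num
    linear_combination (X 0 * X 1 ^ 4 * X 2 ^ 2 : MvPolynomial (Fin 4) ℂ) * h33
  · intro h
    rw [Ideal.mem_span_range_iff_exists_fun] at h
    obtain ⟨c, hc⟩ := h
    rw [Fin.sum_univ_four, hd0, hd1, hd2, hd3] at hc
    set φ : MvPolynomial (Fin 4) ℂ →ₐ[ℂ] MvPolynomial (Fin 4) ℂ :=
      aeval ![0, X 1, X 2, 0] with hφ
    have h2 := congrArg φ hc
    simp only [map_add, map_mul, map_pow, map_ofNat, hφ, aeval_X,
      Matrix.cons_val_zero, Matrix.cons_val_one, Matrix.head_cons,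
      Matrix.cons_val_two, Matrix.tail_cons, Matrix.cons_val_three,
      zero_pow, mul_zero, add_zero, zero_mul, ne_eq, OfNat.ofNat_ne_zero,
      not_false_eq_true] at h2
    exact stmt16_aux (aeval ![0, X 1, X 2, 0] (c 0)) (11 * aeval ![0, X 1, X 2, 0] (c 1))
      (by linear_combination h2)
end
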